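/- Let B and D be positive integers and let G = (V, E, w) be a weighted directed graph with integer weights satisfying w(e) ≥ −2B for all e ∈ E and with no negative-weight cycle. Let V₁, …, V_k ⊆ V be pairwise disjoint vertex sets such that for every j and every u, v ∈ V_j, dist_G(u, v) ≤ D·B. Let H be the disjoint union of the induced subgraphs G[V₁], …, G[V_k] (vertex set V₁ ∪ … ∪ V_k, edge set the edges of E with both endpoints in the same V_j, weights inherited from w). Then η(H^B) ≤ D; that is, for every vertex v of H, some minimum-weight walk from the dummy source s to v in (H^B)_s contains at most D edges that are negative in H^B. -/
import Mathlib


open Real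

/-- A walk from `u` to `v` along the edge set `E`; the list records the vertices
visited after `u` (so `[]` is the empty walk, requiring `u = v`). -/
def IsWalk {V : Type*} (E : Set (V × V)) : V → V → List V → Prop
  | u, v, [] => u = v
  | u, v, x :: xs => (u, x) ∈ E ∧ IsWalk E x v xs

/-- The weight of a walk starting at `u` whose subsequent vertices are given by the list. -/
def walkWeight {V : Type*} (w : V × V → ℤ) : V → List V → ℤ
  | _, [] => 0
  | u, x :: xs => w (u, x) + walkWeight w x xs

/-- The number of negative-weight edges on a walk. -/
def countNeg {V : Type*} (w : V × V → ℤ) : V → List V → ℕ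
  | _, [] => 0
  | u, x :: xs => (if w (u, x) < 0 then 1 else 0) + countNeg w x xs

/-- `dist_G(u,v) ≤ r` : there exists a walk from `u` to `v` of weight at most `r`. -/
def DistLE {V : Type*} (E : Set (V × V)) (w : V × V → ℤ) (u v : V) (r : ℝ) : Prop :=
  ∃ p, IsWalk E u v p ∧ (walkWeight w u p : ℝ) ≤ r

/-- `Ball^in_G(v, r) = {u : dist_G(u,v) ≤ r}`. -/
def ballIn {V : Type*} (E : Set (V × V)) (w : V × V → ℤ) (v : V) (r : ℝ) : Set V :=
  {u | DistLE E w u v r}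

/-- `Ball^out_G(u, r) = {v : dist_G(u,v) ≤ r}`. -/
def ballOut {V : Type*} (E : Set (V × V)) (w : V × V → ℤ) (u : V) (r : ℝ) : Set V :=
  {v | DistLE E w u v r}

/-- There is a walk from `u` to `v`. -/
def Reach {V : Type*} (E : Set (V × V)) (u v : V) : Prop := ∃ p, IsWalk E u v p

/-- `u` and `v` lie in the same strongly connected component. -/
def SameSCC {V : Type*} (E : Set (V × V)) (u v : V) : Prop := Reach E u v ∧ Reach E v u

/-- `C` is a strongly connected component (an equivalence class of `SameSCC`). -/
def IsSCCOf {V : Type*} (E : Set (V × V)) (C : Set V) : Prop :=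
  ∃ v, C = {u | SameSCC E u v}

/-- `D` is the (attained) minimum weight of a walk from `u` to `v`. -/
def IsMinDist {V : Type*} (E : Set (V × V)) (w : V × V → ℤ) (u v : V) (D : ℤ) : Prop :=
  (∃ p, IsWalk E u v p ∧ walkWeight w u p = D) ∧
    ∀ p, IsWalk E u v p → D ≤ walkWeight w u p

/-- `w^B`: add `B` to every negative edge weight. -/
def wUp {V : Type*} (w : V × V → ℤ) (B : ℤ) (e : V × V) : ℤ :=
  if w e < 0 then w e + B else w e

lemma isWalk_append {V : Type*} (E : Set (V × V)) :
    ∀ (p : List V) {u v z : V} {q : List V}, IsWalk E u v p → IsWalk E v z q →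
      IsWalk E u z (p ++ q)
  | [], u, v, z, q, h1, h2 => by
      simp only [IsWalk] at h1; subst h1; exact h2
  | x :: xs, u, v, z, q, h1, h2 => ⟨h1.1, isWalk_append E xs h1.2 h2⟩

lemma walkWeight_append {V : Type*} (E : Set (V × V)) (w : V × V → ℤ) :
    ∀ (p : List V) {u v : V} (q : List V), IsWalk E u v p →
      walkWeight w u (p ++ q) = walkWeight w u p + walkWeight w v q
  | [], u, v, q, h => by
      simp only [IsWalk] at h; subst h; simp [walkWeight]
  | x :: xs, u, v, q, h => by
      rw [List.cons_append]
      simp only [walkWeight]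
      rw [walkWeight_append E w xs q h.2, add_assoc]

lemma wUp_walk_lower {V : Type*} (w : V × V → ℤ) (B : ℤ) (hB : 0 ≤ B) :
    ∀ (q : List V) (u : V),
      walkWeight w u q + B * countNeg (wUp w B) u q ≤ walkWeight (wUp w B) u q
  | [], u => by simp [walkWeight, countNeg]
  | x :: xs, u => by
      have ih := wUp_walk_lower w B hB xs x
      simp only [walkWeight, countNeg]
      by_cases h : wUp w B (u, x) < 0
      · have hw : w (u, x) < 0 := by
          unfold wUp at h; by_contra hge
          rw [if_neg hge] at h; exact hge h
        have he : wUp w B (u, x) = w (u, x) + B := by simp [wUp, hw]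
        rw [if_pos h]
        push_cast
        rw [mul_add, he]
        linarith
      · have he : w (u, x) ≤ wUp w B (u, x) := by
          unfold wUp; split <;> omega
        
        rw [if_neg h]
        push_cast
        rw [mul_add]
        linarith

/-- If `G` has weights `≥ -2B`, no negative-weight cycle, and the pairwise
disjoint sets `V₁, …, V_k` each have weak diameter at most `D·B` in `G`, then in the graph
`(H^B)_s` (where `H` is the disjoint union of the induced subgraphs `G[V_j]` and `s` is a
dummy source with `0`-weight edges to every vertex of `H`) every vertex of `H` admits a
minimum-weight walk from `s` containing at most `D` negative edges; i.e. `η(H^B) ≤ D`. -/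
theorem eta_of_scc_union_le {V : Type*} [Fintype V] (E : Set (V × V)) (w : V × V → ℤ)
    (B D : ℕ) (hB : 0 < B) (hD : 0 < D)
    (hw : ∀ e ∈ E, -(2 * (B : ℤ)) ≤ w e)
    (hnc : ¬ ∃ (u : V) (p : List V), IsWalk E u u p ∧ walkWeight w u p < 0)
    (k : ℕ) (Vj : Fin k → Set V)
    (hdisj : Pairwise (Function.onFun Disjoint Vj))
    (hdiam : ∀ j : Fin k, ∀ u ∈ Vj j, ∀ x ∈ Vj j,
      ∃ p, IsWalk E u x p ∧ walkWeight w u p ≤ (D : ℤ) * (B : ℤ))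
    (EH : Set (Option V × Option V))
    (hEH : EH =
      {e | ∃ u x : V, e = (some u, some x) ∧ (u, x) ∈ E ∧ ∃ j, u ∈ Vj j ∧ x ∈ Vj j}
      ∪ {e | ∃ x : V, e = (none, some x) ∧ ∃ j, x ∈ Vj j})
    (wH : Option V × Option V → ℤ)
    (hwH : ∀ u x : V, wH (some u, some x) = wUp w (B : ℤ) (u, x))
    (hwH0 : ∀ x : V, wH (none, some x) = 0) :
    ∀ x : V, (∃ j, x ∈ Vj j) →
      ∃ P, IsWalk EH none (some x) P ∧
        (∀ Q, IsWalk EH none (some x) Q →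
          walkWeight wH none P ≤ walkWeight wH none Q) ∧
        countNeg wH none P ≤ D := by
  intro x ⟨j, hx⟩
  classical
  -- Structure of walks inside `H`: they correspond to walks in `G` staying in `Vj j`.
  have struct : ∀ (rest : List (Option V)) (u : V), IsWalk EH (some u) (some x) rest →
      ∃ q : List V, IsWalk E u x q ∧
        walkWeight wH (some u) rest = walkWeight (wUp w (B : ℤ)) u q ∧
        countNeg wH (some u) rest = countNeg (wUp w (B : ℤ)) u q ∧
        u ∈ Vj j := by
    intro rest
    induction rest with
    | nil =>
      intro u h
      simp only [IsWalk] at h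
      cases h
      exact ⟨[], rfl, rfl, rfl, hx⟩
    | cons y ys ih =>
      intro u h
      obtain ⟨he, hys⟩ := h
      rw [hEH] at he
      rcases he with ⟨a, b, hab, habE, j0, ha, hb⟩ | ⟨a, heq, _⟩
      · obtain ⟨h1, h2⟩ := Prod.mk.injEq .. ▸ hab
        obtain rfl : u = a := Option.some.inj h1
        subst h2
        obtain ⟨q, hq, hwq, hcq, hbj⟩ := ih b hys
        have hj0 : j0 = j := by
          by_contra hne
          exact Set.disjoint_left.mp (hdisj hne) hb hbj
        refine ⟨b :: q, ⟨habE, hq⟩, ?_, ?_, hj0 ▸ ha⟩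
        · simp only [walkWeight, hwH, hwq]
        · simp only [countNeg, hwH, hcq]
      · exact absurd (congrArg Prod.fst heq) (by simp)
  -- Lower bound for the weight of any walk from the source to `x`.
  have lower : ∀ Q, IsWalk EH none (some x) Q →
      -((D : ℤ) * (B : ℤ)) + (B : ℤ) * countNeg wH none Q ≤ walkWeight wH none Q := by
    intro Q hQ
    cases Q with
    | nil => exact absurd hQ (by simp [IsWalk])
    | cons y ys =>
      obtain ⟨he, hys⟩ := hQ
      rw [hEH] at he
      rcases he with ⟨a, b, hab, -⟩ | ⟨a, heq, j', ha⟩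
      · exact absurd (congrArg Prod.fst hab) (by simp)
      · obtain ⟨h1, h2⟩ := Prod.mk.injEq .. ▸ heq
        subst h2
        obtain ⟨q, hq, hwq, hcq, huj⟩ := struct ys a hys
        obtain ⟨p', hp', hwp'⟩ := hdiam j x hx a huj
        have hclosed : IsWalk E a a (q ++ p') := isWalk_append E q hq hp'
        have h0 : ¬ walkWeight w a (q ++ p') < 0 := fun hlt => hnc ⟨a, _, hclosed, hlt⟩
        have happ := walkWeight_append E w q p' hq
        have hqlow : -((D : ℤ) * (B : ℤ)) ≤ walkWeight w a q := by
          rw [happ] at h0; linarith [not_lt.mp h0]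
        have hlow := wUp_walk_lower w (B : ℤ) (by positivity) q a
        have hz : wH (none, some a) = 0 := hwH0 a
        have hcond : ¬ wH (none, some a) < 0 := by rw [hz]; exact lt_irrefl 0
        simp only [walkWeight, countNeg, if_neg hcond, hz, hwq, hcq, zero_add]
        push_cast
        linarith
  -- The set of walk weights is nonempty and bounded below, hence has a minimum.
  have hxwalk : IsWalk EH none (some x) [some x] :=
    ⟨hEH ▸ Or.inr ⟨x, rfl, j, hx⟩, rfl⟩
  have hxw0 : walkWeight wH none [some x] = 0 := by
    simp [walkWeight, hwH0]
  obtain ⟨lb, ⟨P, hP, hPw⟩, hmin⟩ :=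
    Int.exists_least_of_bdd (P := fun z => ∃ Q, IsWalk EH none (some x) Q ∧
        walkWeight wH none Q = z)
      ⟨-((D : ℤ) * (B : ℤ)), fun z ⟨Q, hQ, hzQ⟩ => by
        have := lower Q hQ
        have hc : (0 : ℤ) ≤ (B : ℤ) * countNeg wH none Q := by positivity
        omega⟩
      ⟨0, [some x], hxwalk, hxw0⟩
  refine ⟨P, hP, fun Q hQ => hPw ▸ hmin _ ⟨Q, hQ, rfl⟩, ?_⟩
  have hle0 : lb ≤ 0 := hmin 0 ⟨[some x], hxwalk, hxw0⟩
  have hlP := lower P hP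
  rw [hPw] at hlP
  have hBt : (B : ℤ) * countNeg wH none P ≤ (D : ℤ) * (B : ℤ) := by linarith
  have hBpos : (0 : ℤ) < (B : ℤ) := by exact_mod_cast hB
  have : (countNeg wH none P : ℤ) ≤ (D : ℤ) := by
    rw [mul_comm (D : ℤ)] at hBt
    exact le_of_mul_le_mul_left hBt hBpos
  exact_mod_cast this
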